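/- arXiv:math/0209294 — 5 statements merged into one kernel-verified Lean document; each statement's English description precedes it below -/
import Mathlib

section
/- Let a_1,...,a_N be distinct complex numbers with N ≥ 2 and u_1,...,u_N nonzero complex numbers satisfying ∑_i u_i = 0 and ∑_i a_i u_i = 0. Define P_u(X) = ∑_i u_i ∏_{j≠i}(X - a_j). Then ∑_{i=1}^N u_i · P_u'(a_i)/P_u(a_i) = 0. -/
/-!
Since `P_u(a_i) = u_i ∏_{j ≠ i} (a_i - a_j)`, the sum equals `∑ P_u'(a_i) / ∏_{j ≠ i} (a_i - a_j)`,
which by Lagrange interpolation is the coefficient of `X ^ (N - 1)` in `P_u'`. It vanishes because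
`deg P_u < N`.
-/

open Polynomial Finset

namespace Lagrange

variable {ι : Type*} [DecidableEq ι] {s : Finset ι}

theorem eval_sum_C_mul_nodal_erase {R : Type*} [CommRing R] (u v : ι → R) {i : ι} (hi : i ∈ s) :
    (∑ k ∈ s, C (u k) * nodal (s.erase k) v).eval (v i) = u i * ∏ j ∈ s.erase i, (v i - v j) := by
  rw [eval_finsetSum, sum_eq_single_of_mem i hi, eval_mul, eval_C, eval_nodal]
  intro k _ hki
  rw [eval_mul, eval_nodal_at_node (mem_erase.mpr ⟨hki.symm, hi⟩), mul_zero]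

variable {F : Type*} [Field F]

theorem degree_sum_C_mul_nodal_erase_lt (u v : ι → F) :
    (∑ k ∈ s, C (u k) * nodal (s.erase k) v).degree < #s := by
  refine (degree_sum_le _ _).trans_lt
    ((Finset.sup_lt_iff (WithBot.bot_lt_coe _)).mpr fun k hk => ?_)
  calc (C (u k) * nodal (s.erase k) v).degree
      ≤ (nodal (s.erase k) v).degree := C_mul' (u k) _ ▸ degree_smul_le _ _
    _ = ↑(#s - 1) := by rw [degree_nodal, card_erase_of_mem hk]
    _ < #s := by exact_mod_cast Nat.sub_one_lt (card_ne_zero_of_mem hk)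

theorem sum_eval_derivative_div_prod_sub_eq_zero {v : ι → F} (hvs : Set.InjOn v s) {Q : F[X]}
    (hQ : Q.degree < #s) :
    ∑ i ∈ s, Q.derivative.eval (v i) / ∏ j ∈ s.erase i, (v i - v j) = 0 := by
  have hQ' : Q.degree < ↑(#s - 1 + 1) := hQ.trans_le (by norm_cast; omega)
  rw [← coeff_eq_sum hvs (degree_derivative_le.trans_lt hQ), coeff_derivative,
    coeff_eq_zero_of_degree_lt hQ', zero_mul]

end Lagrange

theorem stmt_2_general (N : ℕ) (a u : Fin N → ℂ)
    (ha : Function.Injective a) (hu : ∀ i, u i ≠ 0)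
    (Pu : Polynomial ℂ)
    (hPu : Pu = ∑ i, C (u i) * ∏ j ∈ Finset.univ.erase i, (X - C (a j))) :
    ∑ i, u i * (Pu.derivative.eval (a i) / Pu.eval (a i)) = 0 := by
  simp only [← Lagrange.nodal_eq] at hPu
  have hterm : ∀ i, u i * (Pu.derivative.eval (a i) / Pu.eval (a i))
      = Pu.derivative.eval (a i) / ∏ j ∈ univ.erase i, (a i - a j) := fun i => by
    rw [hPu, Lagrange.eval_sum_C_mul_nodal_erase u a (mem_univ i), mul_div_assoc',
      mul_div_mul_left _ _ (hu i), ← hPu]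
  simp only [hterm]
  exact Lagrange.sum_eval_derivative_div_prod_sub_eq_zero ha.injOn
    (hPu ▸ Lagrange.degree_sum_C_mul_nodal_erase_lt u a)

/-- For distinct `a₁,…,a_N` (`N ≥ 2`) and nonzero `u₁,…,u_N` with
`∑ u_i = 0` and `∑ a_i u_i = 0`, and `P_u(X) = ∑ i, u_i ∏_{j≠i}(X - a_j)`, one has
`∑ i, u_i P_u'(a_i)/P_u(a_i) = 0`. -/
theorem stmt_2 (N : ℕ) (hN : 2 ≤ N) (a u : Fin N → ℂ)
    (ha : Function.Injective a) (hu : ∀ i, u i ≠ 0)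
    (hu0 : ∑ i, u i = 0) (hu1 : ∑ i, a i * u i = 0)
    (Pu : Polynomial ℂ)
    (hPu : Pu = ∑ i, C (u i) * ∏ j ∈ Finset.univ.erase i, (X - C (a j))) :
    ∑ i, u i * (Pu.derivative.eval (a i) / Pu.eval (a i)) = 0 :=
  stmt_2_general N a u ha hu Pu hPu
end

section
/- Let R be a commutative ℂ-algebra and V a ℂ-vector space, and consider the graded algebra R ⊗ S•(V) with R in degree 0 and V in degree 1. There is a bijective correspondence between Poisson structures on R ⊗ S•(V) of degree −1 and Lie brackets {,} : Λ²(R ⊕ (V ⊗ R)) → R ⊕ (V ⊗ R) of degree −1 (where R has degree 0 and V⊗R degree 1) satisfying the Leibniz rule {r f, f'} = r{f, f'} + {r, f'} f for all r ∈ R and f, f' ∈ R ⊕ (V ⊗ R). -/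
open MvPolynomial
set_option linter.unusedSectionVars false

/-- A Poisson structure of degree `-1` on the graded algebra `R ⊗ S•(V)`, modelled (after
a choice of basis `ι` of `V`) as `MvPolynomial ι R`, with `R` in degree `0` and the
variables in degree `1`: a `ℂ`-bilinear antisymmetric biderivation satisfying the Jacobi
identity, sending homogeneous elements of degrees `i`, `j` to homogeneous elements of
degree `i + j - 1` (and vanishing on pairs of degree-zero elements). -/
structure PoissonNegOne (R : Type) [CommRing R] [Algebra ℂ R] (ι : Type) where
  br : MvPolynomial ι R →ₗ[ℂ] MvPolynomial ι R →ₗ[ℂ] MvPolynomial ι R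
  antisymm : ∀ f g, br f g = - br g f
  leibniz : ∀ f g h, br f (g * h) = g * br f h + br f g * h
  jacobi : ∀ f g h, br f (br g h) = br (br f g) h + br g (br f h)
  degree : ∀ (i j : ℕ) (f g), f.IsHomogeneous i → g.IsHomogeneous j →
    (br f g).IsHomogeneous (i + j - 1)
  deg_zero : ∀ f g, f.IsHomogeneous 0 → g.IsHomogeneous 0 → br f g = 0

/-- A "ringed Lie algebra" structure on `𝒢 = R ⊕ (V ⊗ R)` (with `V ⊗ R` modelled as
`ι →₀ R`): a Lie bracket of degree `-1` (`{𝒢⁰,𝒢⁰} = 0`, `{𝒢¹,𝒢⁰} ⊆ 𝒢⁰`,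
`{𝒢¹,𝒢¹} ⊆ 𝒢¹`), given by its components `b10 : 𝒢¹ × 𝒢⁰ → 𝒢⁰` and
`b11 : 𝒢¹ × 𝒢¹ → 𝒢¹`, satisfying antisymmetry, the Jacobi identity, and the Leibniz
rule `{r f, f'} = r {f, f'} + {r, f'} f` for `r ∈ R`, `f, f' ∈ 𝒢`. -/
structure RingedLie (R : Type) [CommRing R] [Algebra ℂ R] (ι : Type) where
  b10 : (ι →₀ R) →ₗ[ℂ] R →ₗ[ℂ] R
  b11 : (ι →₀ R) →ₗ[ℂ] (ι →₀ R) →ₗ[ℂ] (ι →₀ R)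
  antisymm : ∀ f g, b11 f g = - b11 g f
  deriv0 : ∀ f (r s : R), b10 f (r * s) = r * b10 f s + (b10 f r) * s
  leibniz1 : ∀ (r : R) (f f' : ι →₀ R), b11 (r • f) f' = r • b11 f f' - (b10 f' r) • f
  leibniz0 : ∀ (r : R) (f : ι →₀ R) (s : R), b10 (r • f) s = r * b10 f s
  jacobi0 : ∀ (f g : ι →₀ R) (r : R),
    b10 (b11 f g) r = b10 f (b10 g r) - b10 g (b10 f r)
  jacobi1 : ∀ f g h, b11 f (b11 g h) = b11 (b11 f g) h + b11 g (b11 f h)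

noncomputable section Stmt8Aux

variable {R : Type} [CommRing R] [Algebra ℂ R] {ι : Type}

/-- the embedding `(ι →₀ R) → MvPolynomial ι R`. -/
def emb8 (f : ι →₀ R) : MvPolynomial ι R := f.sum fun i r => C r * X i

lemma emb8_zero : emb8 (0 : ι →₀ R) = 0 := Finsupp.sum_zero_index

lemma emb8_add (f g : ι →₀ R) : emb8 (f + g) = emb8 f + emb8 g := by
  unfold emb8
  rw [Finsupp.sum_add_index'] <;> intros <;> simp [map_add, add_mul]

lemma emb8_single (i : ι) (r : R) : emb8 (Finsupp.single i r) = C r * X i := by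
  unfold emb8
  rw [Finsupp.sum_single_index] ; simp

lemma emb8_smulR (r : R) (f : ι →₀ R) : emb8 (r • f) = C r * emb8 f := by
  unfold emb8
  rw [Finsupp.sum_smul_index, Finsupp.mul_sum]
  · congr 1; ext i s; simp [map_mul, mul_assoc]
  · intro i; simp

lemma C_smulC (c : ℂ) (r : R) : (C (c • r) : MvPolynomial ι R) = c • C r := by
  rw [Algebra.smul_def, map_mul, ← algebraMap_eq,
    ← IsScalarTower.algebraMap_apply ℂ R (MvPolynomial ι R), ← Algebra.smul_def]

lemma emb8_smulC (c : ℂ) (f : ι →₀ R) : emb8 (c • f) = c • emb8 f := by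
  unfold emb8
  rw [Finsupp.sum_smul_index', Finsupp.smul_sum]
  · congr 1; ext i s; rw [C_smulC, smul_mul_assoc]
  · intro i; simp

/-- the embedding as a `ℂ`-linear map. -/
def embl : (ι →₀ R) →ₗ[ℂ] MvPolynomial ι R where
  toFun := emb8
  map_add' := emb8_add
  map_smul' := emb8_smulC

@[simp] lemma embl_apply (f : ι →₀ R) : (embl f : MvPolynomial ι R) = emb8 f := rfl

lemma emb8_isHomogeneous (f : ι →₀ R) : (emb8 f).IsHomogeneous 1 := by
  apply MvPolynomial.IsHomogeneous.sum
  intro i _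
  simpa using (isHomogeneous_C ι (f i)).mul (isHomogeneous_X R i)

lemma coeff_emb8_single (v : ι →₀ R) (i : ι) :
    coeff (Finsupp.single i 1) (emb8 v) = v i := by
  classical
  unfold emb8
  rw [Finsupp.sum]
  rw [MvPolynomial.coeff_sum]
  rw [Finset.sum_eq_single i]
  · simp [coeff_C_mul, coeff_X']
  · intro j _ hj
    simp only [coeff_C_mul, coeff_X']
    rw [if_neg, mul_zero]
    intro h
    exact hj (by simpa using (Finsupp.single_left_injective one_ne_zero).eq_iff.1 h ▸ rfl)
  · intro hi
    simp [Finsupp.notMem_support_iff.1 hi]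


/-- extract the degree-1 coefficients -/
def unemb8 (h : MvPolynomial ι R) : ι →₀ R := by
  classical
  exact Finsupp.onFinset h.vars (fun i => coeff (Finsupp.single i 1) h)
    (fun i hi => by
      rw [MvPolynomial.mem_vars]
      exact ⟨Finsupp.single i 1, MvPolynomial.mem_support_iff.2 hi, by simp⟩)

@[simp] lemma unemb8_apply (h : MvPolynomial ι R) (i : ι) :
    unemb8 h i = coeff (Finsupp.single i 1) h := rfl

lemma unemb8_add (h h' : MvPolynomial ι R) : unemb8 (h + h') = unemb8 h + unemb8 h' := by
  ext i; simp [coeff_add]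

lemma unemb8_smulC (c : ℂ) (h : MvPolynomial ι R) : unemb8 (c • h) = c • unemb8 h := by
  ext i; simp [coeff_smul]

/-- `unemb8` as a `ℂ`-linear map -/
def unembl : MvPolynomial ι R →ₗ[ℂ] (ι →₀ R) where
  toFun := unemb8
  map_add' := unemb8_add
  map_smul' := unemb8_smulC

@[simp] lemma unembl_apply (h : MvPolynomial ι R) : (unembl h : ι →₀ R) = unemb8 h := rfl

lemma unemb8_emb8 (v : ι →₀ R) : unemb8 (emb8 v) = v := by
  ext i; rw [unemb8_apply, coeff_emb8_single]

lemma emb8_injective : Function.Injective (emb8 (R := R) (ι := ι)) :=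
  Function.LeftInverse.injective unemb8_emb8

lemma degree_eq_one (m : ι →₀ ℕ) (hm : m.degree = 1) : ∃ i, m = Finsupp.single i 1 := by
  classical
  have hne : m.support.Nonempty := by
    rw [Finsupp.support_nonempty_iff]
    intro h; rw [h] at hm; simp [map_zero] at hm
  obtain ⟨i, hi⟩ := hne
  have hmi : 1 ≤ m i := Nat.one_le_iff_ne_zero.2 (Finsupp.mem_support_iff.1 hi)
  have hsum : m.support.sum m = 1 := hm
  have h2 := Finset.add_sum_erase _ m hi
  rw [hsum] at h2
  have hmi1 : m i = 1 := le_antisymm (by omega) hmi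
  have hrest : ∀ j ∈ m.support.erase i, m j = 0 := by
    intro j hj
    have := Finset.sum_eq_zero_iff.1 (by omega : ∑ j ∈ m.support.erase i, m j = 0) j hj
    exact this
  refine ⟨i, ?_⟩
  ext j
  rcases eq_or_ne j i with rfl | hji
  · simp [hmi1]
  · rw [Finsupp.single_apply, if_neg (fun h => hji h.symm)]
    by_cases hjs : j ∈ m.support
    · exact hrest j (Finset.mem_erase.2 ⟨hji, hjs⟩)
    · exact Finsupp.notMem_support_iff.1 hjs

lemma coeff_emb8_ne (v : ι →₀ R) (d : ι →₀ ℕ) (hd : ∀ i, d ≠ Finsupp.single i 1) :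
    coeff d (emb8 v) = 0 := by
  classical
  unfold emb8
  rw [Finsupp.sum, MvPolynomial.coeff_sum]
  apply Finset.sum_eq_zero
  intro i _
  simp only [coeff_C_mul, coeff_X']
  rw [if_neg (fun h => hd i h.symm), mul_zero]

lemma isHomog_zero_eq_C {h : MvPolynomial ι R} (hh : h.IsHomogeneous 0) :
    h = C (coeff 0 h) := by
  classical
  ext d
  rcases eq_or_ne d 0 with rfl | hd
  · simp
  · rw [coeff_C, if_neg (Ne.symm hd)]
    by_contra hc
    exact hd (Finsupp.degree_eq_zero_iff d |>.1 (by rw [Finsupp.degree_eq_weight_one]; exact hh hc))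

lemma isHomog_one_eq_emb {h : MvPolynomial ι R} (hh : h.IsHomogeneous 1) :
    h = emb8 (unemb8 h) := by
  ext d
  by_cases hd : ∃ i, d = Finsupp.single i 1
  · obtain ⟨i, rfl⟩ := hd
    rw [coeff_emb8_single, unemb8_apply]
  · push_neg at hd
    rw [coeff_emb8_ne _ _ hd]
    by_contra hc
    obtain ⟨i, hi⟩ := degree_eq_one d (by rw [Finsupp.degree_eq_weight_one]; exact hh hc)
    exact hd i hi

end Stmt8Aux

noncomputable section Stmt8Main

variable {R : Type} [CommRing R] [Algebra ℂ R] {ι : Type}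

namespace RingedLie

variable (L : RingedLie R ι)

/-- the derivation of `R` attached to a basis vector -/
def dd (i : ι) : R →ₗ[ℂ] R := L.b10 (Finsupp.single i 1)

lemma b10_one (f : ι →₀ R) : L.b10 f 1 = 0 := by
  have h := L.deriv0 f 1 1
  rw [mul_one, one_mul, mul_one] at h
  exact (left_eq_add.1 h)

lemma dd_mul (i : ι) (r s : R) : L.dd i (r * s) = r * L.dd i s + L.dd i r * s :=
  L.deriv0 _ r s

lemma b10_eq_sum (f : ι →₀ R) (r : R) : True := trivial

/-- coefficientwise application of `dd i` to a polynomial -/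
def delta (i : ι) (p : MvPolynomial ι R) : MvPolynomial ι R :=
  p.support.sum fun m => monomial m (L.dd i (coeff m p))

lemma coeff_delta (i : ι) (p : MvPolynomial ι R) (m : ι →₀ ℕ) :
    coeff m (L.delta i p) = L.dd i (coeff m p) := by
  classical
  unfold delta
  rw [MvPolynomial.coeff_sum]
  simp only [coeff_monomial]
  rw [Finset.sum_ite_eq' p.support m (fun m' => L.dd i (coeff m' p))]
  split
  · rfl
  · rw [MvPolynomial.notMem_support_iff.1 (by assumption), map_zero]

lemma delta_add (i : ι) (p q : MvPolynomial ι R) :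
    L.delta i (p + q) = L.delta i p + L.delta i q := by
  ext m; simp [coeff_delta, coeff_add]

lemma delta_smulC (i : ι) (c : ℂ) (p : MvPolynomial ι R) :
    L.delta i (c • p) = c • L.delta i p := by
  ext m; simp [coeff_delta, coeff_smul]

lemma delta_C (i : ι) (r : R) : L.delta i (C r) = C (L.dd i r) := by
  classical
  ext m
  rcases eq_or_ne m 0 with rfl | hm
  · simp [coeff_delta, coeff_C]
  · rw [coeff_delta, coeff_C, coeff_C, if_neg (Ne.symm hm), if_neg (Ne.symm hm), map_zero]

lemma delta_X (i j : ι) : L.delta i (X j) = 0 := by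
  classical
  ext m
  rw [coeff_delta, coeff_X', MvPolynomial.coeff_zero]
  split
  · exact L.b10_one _
  · exact map_zero _

lemma delta_mul (i : ι) (p q : MvPolynomial ι R) :
    L.delta i (p * q) = p * L.delta i q + L.delta i p * q := by
  classical
  ext m
  rw [coeff_delta, coeff_add, MvPolynomial.coeff_mul, MvPolynomial.coeff_mul,
    MvPolynomial.coeff_mul, map_sum, ← Finset.sum_add_distrib]
  apply Finset.sum_congr rfl
  intro x _
  rw [L.dd_mul, coeff_delta, coeff_delta]

lemma delta_isHomogeneous (i : ι) {p : MvPolynomial ι R} {n : ℕ}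
    (hp : p.IsHomogeneous n) : (L.delta i p).IsHomogeneous n := by
  intro d hd
  rw [coeff_delta] at hd
  exact hp (fun h => hd (by rw [h, map_zero]))

end RingedLie

lemma smulC_eq (c : ℂ) (x : MvPolynomial ι R) :
    c • x = C (algebraMap ℂ R c) * x := by
  rw [Algebra.smul_def, IsScalarTower.algebraMap_apply ℂ R (MvPolynomial ι R), algebraMap_eq]

lemma MD_add (v w : ι → MvPolynomial ι R) :
    mkDerivation R (v + w) = mkDerivation R v + mkDerivation R w := by
  apply derivation_ext; intro i; simp

lemma MD_add' (v w : ι → MvPolynomial ι R) (f : MvPolynomial ι R) :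
    mkDerivation R (fun i => v i + w i) f = mkDerivation R v f + mkDerivation R w f := by
  have : (fun i => v i + w i) = v + w := rfl
  rw [this, MD_add]; rfl

lemma MD_smul (a : MvPolynomial ι R) (v : ι → MvPolynomial ι R) :
    mkDerivation R (fun i => a • v i) = a • mkDerivation R v := by
  apply derivation_ext; intro i; simp

lemma MD_smul' (a : MvPolynomial ι R) (v : ι → MvPolynomial ι R) (f : MvPolynomial ι R) :
    mkDerivation R (fun i => a * v i) f = a * mkDerivation R v f := by
  have h := MD_smul a v
  have : (fun i => a * v i) = fun i => a • v i := by ext i; rw [smul_eq_mul]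
  rw [this, h]; rfl

lemma MD_neg' (v : ι → MvPolynomial ι R) (f : MvPolynomial ι R) :
    mkDerivation R (fun i => -(v i)) f = -(mkDerivation R v f) := by
  have : (fun i => -(v i)) = fun i => (-1 : MvPolynomial ι R) * v i := by ext i; ring
  rw [this, MD_smul']; ring

lemma MD_zero' (f : MvPolynomial ι R) :
    mkDerivation R (fun _ : ι => (0 : MvPolynomial ι R)) f = 0 := by
  have : (fun _ : ι => (0 : MvPolynomial ι R)) = fun i => (0 : MvPolynomial ι R) * 0 := by
    ext i; ring
  rw [this, MD_smul']; ring

lemma MD_C (v : ι → MvPolynomial ι R) (r : R) :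
    mkDerivation R v (C r) = 0 := by simp

lemma MD_smulC (v : ι → MvPolynomial ι R) (c : ℂ) (g : MvPolynomial ι R) :
    mkDerivation R v (c • g) = c • mkDerivation R v g := by
  rw [smulC_eq, Derivation.leibniz, derivation_C, smul_zero, add_zero, smul_eq_mul, ← smulC_eq]

namespace RingedLie

variable (L : RingedLie R ι)

/-- the matrix of degree-1 brackets -/
def BB (i j : ι) : MvPolynomial ι R := emb8 (L.b11 (Finsupp.single i 1) (Finsupp.single j 1))

lemma emb8_neg (v : ι →₀ R) : emb8 (-v) = - emb8 v := by
  have := map_neg (embl (R := R) (ι := ι)) v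
  simpa using this

lemma BB_antisymm (i j : ι) : L.BB i j = - L.BB j i := by
  rw [BB, BB, L.antisymm, emb8_neg]

/-- the values of the extended bracket `{·, g}` on the variables -/
def Kd (g : MvPolynomial ι R) : ι → MvPolynomial ι R :=
  fun i => L.delta i g + mkDerivation R (L.BB i) g

/-- the extended Poisson bracket on `MvPolynomial ι R` -/
def bb (f g : MvPolynomial ι R) : MvPolynomial ι R :=
  mkDerivation R (L.Kd g) f - mkDerivation R (fun j => L.delta j f) g

lemma bb_C_C (r s : R) : L.bb (C r) (C s) = 0 := by
  unfold bb Kd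
  rw [MD_C]
  simp [delta_C, MD_C]

lemma bb_X_C (i : ι) (r : R) : L.bb (X i) (C r) = C (L.dd i r) := by
  unfold bb Kd
  rw [mkDerivation_X, MD_C, delta_C, MD_C, add_zero, sub_zero]

lemma bb_C_X (r : R) (j : ι) : L.bb (C r) (X j) = - C (L.dd j r) := by
  unfold bb Kd
  rw [MD_C]
  have : (fun j' => L.delta j' (C r)) = fun j' => C (L.dd j' r) := by
    ext j'; rw [delta_C]
  rw [this]
  rw [show (mkDerivation R (fun j' => (C (L.dd j' r) : MvPolynomial ι R)) (X j)) =
    C (L.dd j r) from mkDerivation_X R _ j]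
  ring

lemma bb_X_X (i j : ι) : L.bb (X i) (X j) = L.BB i j := by
  unfold bb Kd
  rw [mkDerivation_X, mkDerivation_X, delta_X]
  have : (fun j' => L.delta j' (X i)) = fun _ => (0 : MvPolynomial ι R) := by
    ext j'; rw [delta_X]
  rw [this, MD_zero']
  ring

lemma bb_add_left (f f' g : MvPolynomial ι R) :
    L.bb (f + f') g = L.bb f g + L.bb f' g := by
  unfold bb
  rw [map_add]
  have : (fun j => L.delta j (f + f')) = fun j => L.delta j f + L.delta j f' := by
    ext j; rw [delta_add]
  rw [this, MD_add']
  ring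

lemma bb_smul_left (c : ℂ) (f g : MvPolynomial ι R) :
    L.bb (c • f) g = c • L.bb f g := by
  unfold bb
  have h1 : (mkDerivation R (L.Kd g)) (c • f) = c • (mkDerivation R (L.Kd g)) f :=
    MD_smulC _ c f
  have h2 : (fun j => L.delta j (c • f)) = fun j => c • L.delta j f := by
    ext j; rw [delta_smulC]
  rw [h1, h2]
  have h3 : (fun j => c • L.delta j f) = fun j => (C (algebraMap ℂ R c) : MvPolynomial ι R) *
      L.delta j f := by ext j; rw [smulC_eq]
  rw [h3, MD_smul', ← smulC_eq, smul_sub]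

lemma bb_add_right (f g g' : MvPolynomial ι R) :
    L.bb f (g + g') = L.bb f g + L.bb f g' := by
  unfold bb
  have : L.Kd (g + g') = fun i => L.Kd g i + L.Kd g' i := by
    ext i; unfold Kd; rw [delta_add, map_add]; ring
  rw [this, MD_add', map_add]
  ring

lemma bb_smul_right (c : ℂ) (f g : MvPolynomial ι R) :
    L.bb f (c • g) = c • L.bb f g := by
  unfold bb
  have : L.Kd (c • g) = fun i => (C (algebraMap ℂ R c) : MvPolynomial ι R) * L.Kd g i := by
    ext i; unfold Kd
    rw [delta_smulC, MD_smulC, ← smul_add, smulC_eq]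
  rw [this, MD_smul', MD_smulC, ← smulC_eq, smul_sub]

lemma bb_leibniz_right (f g h : MvPolynomial ι R) :
    L.bb f (g * h) = g * L.bb f h + L.bb f g * h := by
  unfold bb
  have hKd : L.Kd (g * h) = fun i => g * L.Kd h i + h * L.Kd g i := by
    ext i; unfold Kd
    rw [delta_mul, Derivation.leibniz, smul_eq_mul, smul_eq_mul]
    ring
  have h2 : (mkDerivation R (fun j => L.delta j f)) (g * h)
      = g * (mkDerivation R (fun j => L.delta j f)) h
        + h * (mkDerivation R (fun j => L.delta j f)) g := by
    rw [Derivation.leibniz, smul_eq_mul, smul_eq_mul]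
  have h3 : mkDerivation R (L.Kd (g * h)) f
      = g * mkDerivation R (L.Kd h) f + h * mkDerivation R (L.Kd g) f := by
    rw [hKd]
    rw [show (fun i => g * L.Kd h i + h * L.Kd g i)
        = fun i => (g * L.Kd h i) + (h * L.Kd g i) from rfl]
    rw [MD_add', MD_smul', MD_smul']
  rw [h2, h3]
  ring

/-- the second-order term -/
def TT (f g : MvPolynomial ι R) : MvPolynomial ι R :=
  mkDerivation R (fun i => mkDerivation R (L.BB i) g) f

lemma TT_antisymm (f : MvPolynomial ι R) : ∀ g, L.TT f g = - L.TT g f := by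
  induction f using MvPolynomial.induction_on with
  | C r =>
    intro g
    unfold TT
    rw [MD_C]
    have : (fun i => mkDerivation R (L.BB i) (C r)) = fun _ => (0 : MvPolynomial ι R) := by
      ext i; rw [MD_C]
    rw [this, MD_zero', neg_zero]
  | add p q hp hq =>
    intro g
    unfold TT at *
    rw [map_add]
    have : (fun i => mkDerivation R (L.BB i) (p + q))
        = fun i => mkDerivation R (L.BB i) p + mkDerivation R (L.BB i) q := by
      ext i; rw [map_add]
    rw [hp g, hq g, this, MD_add']
    ring
  | mul_X p n hp =>
    intro g
    unfold TT at *
    have e1 : (mkDerivation R fun i => (mkDerivation R (L.BB i)) g) (p * X n)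
        = p * mkDerivation R (L.BB n) g
          + X n * (mkDerivation R fun i => (mkDerivation R (L.BB i)) g) p := by
      rw [Derivation.leibniz, smul_eq_mul, smul_eq_mul, mkDerivation_X]
      try ring
    have e2 : (fun i => (mkDerivation R (L.BB i)) (p * X n))
        = fun i => p * L.BB i n + X n * (mkDerivation R (L.BB i)) p := by
      ext i; rw [Derivation.leibniz, smul_eq_mul, smul_eq_mul, mkDerivation_X]; try ring
    rw [e1, e2]
    rw [show (fun i => p * L.BB i n + X n * (mkDerivation R (L.BB i)) p)
        = fun i => (p * L.BB i n) + (X n * (mkDerivation R (L.BB i)) p) from rfl]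
    rw [MD_add', MD_smul', MD_smul']
    rw [hp g]
    have e3 : (mkDerivation R fun i => L.BB i n) g
        = - mkDerivation R (L.BB n) g := by
      rw [show (fun i => L.BB i n) = fun i => -(L.BB n i) by
        ext i; rw [← BB_antisymm]]
      rw [MD_neg']
    rw [e3]
    ring

lemma bb_antisymm (f g : MvPolynomial ι R) : L.bb f g = - L.bb g f := by
  have key : L.bb f g + L.bb g f = L.TT f g + L.TT g f := by
    unfold bb TT
    have e : ∀ u v : MvPolynomial ι R, mkDerivation R (L.Kd v) u
        = mkDerivation R (fun i => L.delta i v) u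
          + mkDerivation R (fun i => mkDerivation R (L.BB i) v) u := by
      intro u v
      rw [show L.Kd v = fun i => L.delta i v + mkDerivation R (L.BB i) v from rfl, MD_add']
    rw [e f g, e g f]
    ring
  have := L.TT_antisymm f g
  rw [this] at key
  have h0 : L.bb f g + L.bb g f = 0 := by rw [key]; ring
  linear_combination h0

lemma bb_leibniz_left (f g h : MvPolynomial ι R) :
    L.bb (f * g) h = f * L.bb g h + L.bb f h * g := by
  rw [bb_antisymm, bb_leibniz_right, bb_antisymm L h g, bb_antisymm L h f]
  ring

/-- the bracket as a bilinear map -/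
def brl : MvPolynomial ι R →ₗ[ℂ] MvPolynomial ι R →ₗ[ℂ] MvPolynomial ι R :=
  LinearMap.mk₂ ℂ L.bb L.bb_add_left L.bb_smul_left L.bb_add_right L.bb_smul_right

@[simp] lemma brl_apply (f g : MvPolynomial ι R) : L.brl f g = L.bb f g := rfl

lemma bb_zero_left (g : MvPolynomial ι R) : L.bb 0 g = 0 := by
  have h : L.brl 0 g = 0 := by rw [map_zero]; rfl
  rw [← brl_apply, h]

lemma bb_zero_right (f : MvPolynomial ι R) : L.bb f 0 = 0 := by
  have : L.brl f 0 = 0 := map_zero _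
  simpa using this

lemma emb8_X (i : ι) : emb8 (Finsupp.single i (1 : R)) = X i := by
  rw [emb8_single, map_one, one_mul]

lemma emb8_sub (u v : ι →₀ R) : emb8 (u - v) = emb8 u - emb8 v := by
  have := map_sub (embl (R := R) (ι := ι)) u v
  simpa using this

lemma b10_single (i : ι) (a r : R) : L.b10 (Finsupp.single i a) r = a * L.dd i r := by
  have h : Finsupp.single i a = a • Finsupp.single i (1 : R) := by
    rw [Finsupp.smul_single, smul_eq_mul, mul_one]
  rw [h, L.leibniz0]; rfl

lemma bb_emb_C (f : ι →₀ R) (r : R) : L.bb (emb8 f) (C r) = C (L.b10 f r) := by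
  induction f using Finsupp.induction_linear with
  | zero => rw [emb8_zero, bb_zero_left, map_zero, LinearMap.zero_apply, map_zero]
  | add u v hu hv =>
    rw [emb8_add, bb_add_left, hu, hv, map_add, LinearMap.add_apply, map_add]
  | single i a =>
    rw [emb8_single, bb_leibniz_left, bb_X_C, bb_C_C, zero_mul, add_zero,
      b10_single, ← map_mul]

lemma b11_single_one (i j : ι) (b : R) :
    L.b11 (Finsupp.single i 1) (Finsupp.single j b)
      = b • L.b11 (Finsupp.single i 1) (Finsupp.single j 1)
        + (L.dd i b) • Finsupp.single j (1 : R) := by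
  have h : Finsupp.single j b = b • Finsupp.single j (1 : R) := by
    rw [Finsupp.smul_single, smul_eq_mul, mul_one]
  rw [L.antisymm, h, L.leibniz1, L.antisymm (Finsupp.single j 1)]
  rw [neg_sub, smul_neg, sub_neg_eq_add]
  rw [add_comm]
  rfl

lemma b11_single_single (i j : ι) (a b : R) :
    L.b11 (Finsupp.single i a) (Finsupp.single j b)
      = (a * b) • L.b11 (Finsupp.single i 1) (Finsupp.single j 1)
        + (a * L.dd i b) • Finsupp.single j (1 : R)
        - (b * L.dd j a) • Finsupp.single i (1 : R) := by
  have h : Finsupp.single i a = a • Finsupp.single i (1 : R) := by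
    rw [Finsupp.smul_single, smul_eq_mul, mul_one]
  rw [h, L.leibniz1, b11_single_one, b10_single, smul_add, smul_smul, smul_smul]

lemma bb_emb_emb (f g : ι →₀ R) : L.bb (emb8 f) (emb8 g) = emb8 (L.b11 f g) := by
  induction f using Finsupp.induction_linear with
  | zero => rw [emb8_zero, bb_zero_left, map_zero, LinearMap.zero_apply, emb8_zero]
  | add u v hu hv =>
    rw [emb8_add, bb_add_left, hu, hv, map_add, LinearMap.add_apply, emb8_add]
  | single i a =>
    induction g using Finsupp.induction_linear with
    | zero => rw [emb8_zero, bb_zero_right, map_zero, emb8_zero]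
    | add u v hu hv =>
      rw [emb8_add, bb_add_right, hu, hv, map_add, emb8_add]
    | single j b =>
      rw [emb8_single, emb8_single, bb_leibniz_left, bb_leibniz_right, bb_leibniz_right,
        bb_X_C, bb_X_X, bb_C_X, bb_C_C, b11_single_single]
      rw [emb8_sub, emb8_add]
      rw [emb8_smulR, emb8_smulR, emb8_smulR]
      rw [show L.BB i j = emb8 (L.b11 (Finsupp.single i 1) (Finsupp.single j 1)) from rfl]
      rw [emb8_X, emb8_X, map_mul, map_mul, map_mul]
      ring


lemma bb_neg_right (f g : MvPolynomial ι R) : L.bb f (-g) = -(L.bb f g) := by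
  have h := map_neg (L.brl f) g
  rw [← brl_apply, h, brl_apply]

/-- the cyclic Jacobiator -/
def Jac (f g h : MvPolynomial ι R) : MvPolynomial ι R :=
  L.bb f (L.bb g h) + L.bb g (L.bb h f) + L.bb h (L.bb f g)

lemma jac_cyc (f g h : MvPolynomial ι R) : L.Jac f g h = L.Jac g h f := by
  unfold Jac; ring

lemma jac_leibniz (f g h k : MvPolynomial ι R) :
    L.Jac f g (h * k) = h * L.Jac f g k + k * L.Jac f g h := by
  have e1 : L.bb f (L.bb g (h * k)) = h * L.bb f (L.bb g k) + L.bb f h * L.bb g k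
      + L.bb g h * L.bb f k + L.bb f (L.bb g h) * k := by
    rw [bb_leibniz_right L g h k, bb_add_right, bb_leibniz_right L f h (L.bb g k),
      bb_leibniz_right L f (L.bb g h) k]
    ring
  have e2 : L.bb g (L.bb (h * k) f) = -(h * L.bb g (L.bb f k)) - L.bb g h * L.bb f k
      - L.bb f h * L.bb g k - L.bb g (L.bb f h) * k := by
    rw [bb_antisymm L (h * k) f, bb_leibniz_right L f h k, bb_neg_right, bb_add_right,
      bb_leibniz_right L g h (L.bb f k), bb_leibniz_right L g (L.bb f h) k]
    ring
  have e3 : L.bb (h * k) (L.bb f g) = h * L.bb k (L.bb f g) + L.bb h (L.bb f g) * k :=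
    bb_leibniz_left L h k (L.bb f g)
  have e4 : L.bb g (L.bb k f) = -(L.bb g (L.bb f k)) := by
    rw [bb_antisymm L k f, bb_neg_right]
  have e5 : L.bb g (L.bb h f) = -(L.bb g (L.bb f h)) := by
    rw [bb_antisymm L h f, bb_neg_right]
  unfold Jac
  linear_combination e1 + e2 + e3 - h * e4 - k * e5

lemma jac_CCC (r s t : R) : L.Jac (C r) (C s) (C t) = 0 := by
  unfold Jac
  rw [bb_C_C, bb_C_C, bb_C_C, bb_zero_right, bb_zero_right, bb_zero_right]
  ring

lemma jac_CCX (r s : R) (i : ι) : L.Jac (C r) (C s) (X i) = 0 := by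
  unfold Jac
  rw [bb_C_X, bb_X_C, bb_C_C, bb_neg_right, bb_C_C, bb_C_C, bb_zero_right]
  ring

lemma jac_CXX (r : R) (i j : ι) : L.Jac (C r) (X i) (X j) = 0 := by
  unfold Jac
  have t1 : L.bb (C r) (L.bb (X i) (X j))
      = - C (L.b10 (L.b11 (Finsupp.single i 1) (Finsupp.single j 1)) r) := by
    rw [bb_X_X, show L.BB i j = emb8 (L.b11 (Finsupp.single i 1) (Finsupp.single j 1)) from rfl,
      bb_antisymm, bb_emb_C]
  have t2 : L.bb (X i) (L.bb (X j) (C r)) = C (L.dd i (L.dd j r)) := by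
    rw [bb_X_C, bb_X_C]
  have t3 : L.bb (X j) (L.bb (C r) (X i)) = - C (L.dd j (L.dd i r)) := by
    rw [bb_C_X, bb_neg_right, bb_X_C]
  rw [t1, t2, t3]
  have hj : L.b10 (L.b11 (Finsupp.single i 1) (Finsupp.single j 1)) r
      = L.dd i (L.dd j r) - L.dd j (L.dd i r) := L.jacobi0 _ _ r
  rw [hj, map_sub]
  ring

lemma jac_XXX (i j k : ι) : L.Jac (X i) (X j) (X k) = 0 := by
  unfold Jac
  have h1 : ∀ a b : ι, L.bb (X a) (X b)
      = emb8 (L.b11 (Finsupp.single a 1) (Finsupp.single b 1)) := fun a b => bb_X_X L a b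
  have h2 : ∀ (a : ι) (v : ι →₀ R), L.bb (X a) (emb8 v)
      = emb8 (L.b11 (Finsupp.single a 1) v) := by
    intro a v
    rw [← emb8_X a, bb_emb_emb]
  rw [h1, h1, h1, h2, h2, h2, ← emb8_add, ← emb8_add]
  have key : L.b11 (Finsupp.single i 1) (L.b11 (Finsupp.single j 1) (Finsupp.single k 1))
      + L.b11 (Finsupp.single j 1) (L.b11 (Finsupp.single k 1) (Finsupp.single i 1))
      + L.b11 (Finsupp.single k 1) (L.b11 (Finsupp.single i 1) (Finsupp.single j 1)) = 0 := by
    have hj := L.jacobi1 (Finsupp.single i 1) (Finsupp.single j 1) (Finsupp.single k 1)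
    have hA : L.b11 (Finsupp.single k 1) (L.b11 (Finsupp.single i 1) (Finsupp.single j 1))
        = - L.b11 (L.b11 (Finsupp.single i 1) (Finsupp.single j 1)) (Finsupp.single k 1) :=
      L.antisymm _ _
    have hB : L.b11 (Finsupp.single j 1) (L.b11 (Finsupp.single k 1) (Finsupp.single i 1))
        = - L.b11 (Finsupp.single j 1) (L.b11 (Finsupp.single i 1) (Finsupp.single k 1)) := by
      rw [L.antisymm (Finsupp.single k 1) (Finsupp.single i 1), map_neg]
    rw [hj, hA, hB]
    abel
  rw [key, emb8_zero]

/-- generators -/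
abbrev Gen (u : MvPolynomial ι R) : Prop := (∃ r, u = C r) ∨ (∃ i, u = X i)

lemma jac_gen {a b c : MvPolynomial ι R} (ha : Gen a) (hb : Gen b) (hc : Gen c) :
    L.Jac a b c = 0 := by
  rcases ha with ⟨r, rfl⟩ | ⟨i, rfl⟩ <;> rcases hb with ⟨s, rfl⟩ | ⟨j, rfl⟩ <;>
    rcases hc with ⟨t, rfl⟩ | ⟨k, rfl⟩
  · exact L.jac_CCC r s t
  · exact L.jac_CCX r s k
  · rw [jac_cyc L (C r) (X j) (C t), jac_cyc L (X j) (C t) (C r)]; exact L.jac_CCX t r j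
  · exact L.jac_CXX r j k
  · rw [jac_cyc L (X i) (C s) (C t)]; exact L.jac_CCX s t i
  · rw [jac_cyc L (X i) (C s) (X k)]; exact L.jac_CXX s k i
  · rw [jac_cyc L (X i) (X j) (C t), jac_cyc L (X j) (C t) (X i)]; exact L.jac_CXX t i j
  · exact L.jac_XXX i j k

lemma jac_add3 (a b p q : MvPolynomial ι R) :
    L.Jac a b (p + q) = L.Jac a b p + L.Jac a b q := by
  unfold Jac
  rw [bb_add_right L b p q, bb_add_right L a, bb_add_left L p q a,
    bb_add_right L b (L.bb p a) (L.bb q a), bb_add_left L p q (L.bb a b)]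
  ring

lemma jac_gen2 {a b : MvPolynomial ι R} (ha : Gen a) (hb : Gen b) :
    ∀ h, L.Jac a b h = 0 := by
  intro h
  induction h using MvPolynomial.induction_on with
  | C r => exact L.jac_gen ha hb (Or.inl ⟨r, rfl⟩)
  | add p q hp hq => rw [jac_add3, hp, hq]; ring
  | mul_X p n hp =>
    rw [jac_leibniz, hp, L.jac_gen ha hb (Or.inr ⟨n, rfl⟩)]; ring

lemma jac_gen1 {a : MvPolynomial ι R} (ha : Gen a) :
    ∀ g h, L.Jac a g h = 0 := by
  intro g
  induction g using MvPolynomial.induction_on with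
  | C r => exact L.jac_gen2 ha (Or.inl ⟨r, rfl⟩)
  | add p q hp hq =>
    intro h
    have heq : L.Jac a (p + q) h = L.Jac a p h + L.Jac a q h := by
      rw [jac_cyc L a (p + q) h, jac_cyc L (p + q) h a, jac_cyc L a p h, jac_cyc L p h a,
        jac_cyc L a q h, jac_cyc L q h a, jac_add3]
    rw [heq, hp h, hq h]; ring
  | mul_X p n hp =>
    intro h
    have e : L.Jac a (p * X n) h = L.Jac h a (p * X n) := by
      rw [jac_cyc L a (p * X n) h, jac_cyc L (p * X n) h a]
    rw [e, jac_leibniz]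
    have e1 : L.Jac h a (X n) = L.Jac a (X n) h := by
      rw [jac_cyc L h a (X n)]
    have e2 : L.Jac h a p = L.Jac a p h := by
      rw [jac_cyc L h a p]
    rw [e1, e2, hp h, L.jac_gen2 ha (Or.inr ⟨n, rfl⟩) h]
    ring

lemma jac_all (f g h : MvPolynomial ι R) : L.Jac f g h = 0 := by
  induction f using MvPolynomial.induction_on generalizing g h with
  | C r => exact L.jac_gen1 (Or.inl ⟨r, rfl⟩) g h
  | add p q hp hq =>
    have heq : L.Jac (p + q) g h = L.Jac p g h + L.Jac q g h := by
      rw [jac_cyc L (p + q) g h, jac_cyc L p g h, jac_cyc L q g h, jac_add3]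
    rw [heq, hp g h, hq g h]; ring
  | mul_X p n hp =>
    have e : L.Jac (p * X n) g h = L.Jac g h (p * X n) := by
      rw [jac_cyc L (p * X n) g h]
    rw [e, jac_leibniz]
    have e1 : L.Jac g h (X n) = L.Jac (X n) g h := by
      rw [jac_cyc L (X n) g h]
    have e2 : L.Jac g h p = L.Jac p g h := by
      rw [jac_cyc L p g h]
    rw [e1, e2, hp g h, L.jac_gen1 (Or.inr ⟨n, rfl⟩) g h]
    ring

lemma bb_jacobi (f g h : MvPolynomial ι R) :
    L.bb f (L.bb g h) = L.bb (L.bb f g) h + L.bb g (L.bb f h) := by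
  have h0 := L.jac_all f g h
  unfold Jac at h0
  have e4 : L.bb g (L.bb h f) = -(L.bb g (L.bb f h)) := by
    rw [bb_antisymm L h f, bb_neg_right]
  have e5 : L.bb h (L.bb f g) = -(L.bb (L.bb f g) h) := by
    rw [bb_antisymm L h (L.bb f g)]
  linear_combination h0 - e4 - e5

end RingedLie

section Homog

variable {R : Type} [CommRing R] [Algebra ℂ R] {ι : Type}

lemma fdegree_add (a b : ι →₀ ℕ) : (a + b).degree = a.degree + b.degree := by
  rw [Finsupp.degree_eq_weight_one, map_add]

lemma fdegree_single_one (i : ι) : (Finsupp.single i 1 : ι →₀ ℕ).degree = 1 := by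
  classical
  rw [Finsupp.degree_single]

lemma MD_isHomog {v : ι → MvPolynomial ι R} {k n : ℕ} (hv : ∀ i, (v i).IsHomogeneous k)
    {f : MvPolynomial ι R} (hf : f.IsHomogeneous n) :
    (mkDerivation R v f).IsHomogeneous (n + k - 1) := by
  classical
  rw [← f.support_sum_monomial_coeff, map_sum]
  apply MvPolynomial.IsHomogeneous.sum
  intro m hm
  rw [mkDerivation_monomial, smul_eq_C_mul]
  apply MvPolynomial.IsHomogeneous.C_mul
  apply MvPolynomial.IsHomogeneous.sum
  intro i hi
  dsimp only
  rw [smul_eq_mul]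
  have hdeg : m.degree = n := by
    rw [Finsupp.degree_eq_weight_one]
    exact hf (MvPolynomial.mem_support_iff.1 hm)
  have hmi : 1 ≤ m i := Nat.one_le_iff_ne_zero.2 (Finsupp.mem_support_iff.1 hi)
  have hn1 : 1 ≤ n := by
    rw [← hdeg]
    calc 1 ≤ m i := hmi
    _ ≤ m.degree := Finset.single_le_sum (f := fun j => m j) (fun _ _ => Nat.zero_le _) hi
  have hsub : (m - Finsupp.single i 1) + Finsupp.single i 1 = m := by
    apply tsub_add_cancel_of_le
    rw [Finsupp.single_le_iff]
    exact hmi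
  have hsubdeg : (m - Finsupp.single i 1).degree = n - 1 := by
    have := congrArg Finsupp.degree hsub
    rw [fdegree_add, fdegree_single_one, hdeg] at this
    omega
  have he : n + k - 1 = (n - 1) + k := by omega
  rw [he]
  exact (isHomogeneous_monomial _ hsubdeg).mul (hv i)

end Homog

namespace RingedLie

variable {R : Type} [CommRing R] [Algebra ℂ R] {ι : Type} (L : RingedLie R ι)

lemma BB_isHomog (i j : ι) : (L.BB i j).IsHomogeneous 1 := emb8_isHomogeneous _

lemma bb_degree {i j : ℕ} {f g : MvPolynomial ι R}
    (hf : f.IsHomogeneous i) (hg : g.IsHomogeneous j) :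
    (L.bb f g).IsHomogeneous (i + j - 1) := by
  unfold bb
  apply MvPolynomial.IsHomogeneous.sub
  · have hKd : ∀ a, (L.Kd g a).IsHomogeneous j := by
      intro a
      unfold Kd
      apply MvPolynomial.IsHomogeneous.add
      · exact L.delta_isHomogeneous a hg
      · have := MD_isHomog (v := L.BB a) (fun b => L.BB_isHomog a b) hg
        simpa using this
    exact MD_isHomog hKd hf
  · have h2 := MD_isHomog (v := fun a => L.delta a f) (fun a => L.delta_isHomogeneous a hf) hg
    have he : j + i - 1 = i + j - 1 := by omega
    rwa [he] at h2

lemma bb_deg_zero {f g : MvPolynomial ι R}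
    (hf : f.IsHomogeneous 0) (hg : g.IsHomogeneous 0) : L.bb f g = 0 := by
  rw [isHomog_zero_eq_C hf, isHomog_zero_eq_C hg, bb_C_C]

/-- the Poisson structure extending a ringed Lie algebra structure -/
def toPoisson : PoissonNegOne R ι where
  br := L.brl
  antisymm := L.bb_antisymm
  leibniz := fun f g h => L.bb_leibniz_right f g h
  jacobi := fun f g h => L.bb_jacobi f g h
  degree := fun _ _ _ _ hf hg => L.bb_degree hf hg
  deg_zero := fun _ _ hf hg => L.bb_deg_zero hf hg

end RingedLie

namespace PoissonNegOne

variable {R : Type} [CommRing R] [Algebra ℂ R] {ι : Type} (p : PoissonNegOne R ι)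

lemma br_mul_left (f g h : MvPolynomial ι R) :
    p.br (f * g) h = f * p.br g h + p.br f h * g := by
  rw [p.antisymm (f * g) h, p.leibniz h f g, p.antisymm f h, p.antisymm g h]
  ring

lemma unemb8_neg (h : MvPolynomial ι R) : unemb8 (-h) = - unemb8 h := by
  have := map_neg (unembl (R := R) (ι := ι)) h
  simpa using this

lemma unemb8_C_mul (r : R) (h : MvPolynomial ι R) :
    unemb8 (C r * h) = r • unemb8 h := by
  ext i
  simp [coeff_C_mul]

/-- the degree `(1,0)` component -/
def B10 (f : ι →₀ R) (r : R) : R := coeff 0 (p.br (emb8 f) (C r))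

/-- the degree `(1,1)` component -/
def B11 (f g : ι →₀ R) : ι →₀ R := unemb8 (p.br (emb8 f) (emb8 g))

lemma key0 (f : ι →₀ R) (r : R) : p.br (emb8 f) (C r) = C (p.B10 f r) := by
  apply isHomog_zero_eq_C
  have := p.degree 1 0 _ _ (emb8_isHomogeneous f) (isHomogeneous_C ι r)
  simpa using this

lemma key1 (f g : ι →₀ R) : p.br (emb8 f) (emb8 g) = emb8 (p.B11 f g) := by
  apply isHomog_one_eq_emb
  have := p.degree 1 1 _ _ (emb8_isHomogeneous f) (emb8_isHomogeneous g)
  simpa using this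

lemma keyC (f : ι →₀ R) (r : R) : p.br (C r) (emb8 f) = - C (p.B10 f r) := by
  rw [p.antisymm, key0]

lemma B10_antisymmC (r s : R) : p.br (C r) (C s) = 0 :=
  p.deg_zero _ _ (isHomogeneous_C ι r) (isHomogeneous_C ι s)

lemma pB_antisymm (f g : ι →₀ R) : p.B11 f g = - p.B11 g f := by
  unfold B11
  rw [p.antisymm, unemb8_neg]

lemma pB_deriv0 (f : ι →₀ R) (r s : R) :
    p.B10 f (r * s) = r * p.B10 f s + p.B10 f r * s := by
  unfold B10
  rw [map_mul, p.leibniz, coeff_add, coeff_C_mul, mul_comm _ (C s), coeff_C_mul]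
  ring

lemma pB_leibniz1 (r : R) (f f' : ι →₀ R) :
    p.B11 (r • f) f' = r • p.B11 f f' - (p.B10 f' r) • f := by
  unfold B11
  rw [emb8_smulR, br_mul_left, keyC]
  rw [show (-C (p.B10 f' r) : MvPolynomial ι R) * emb8 f = -(C (p.B10 f' r) * emb8 f) by ring]
  rw [unemb8_add, unemb8_neg, unemb8_C_mul, unemb8_C_mul, unemb8_emb8, sub_eq_add_neg]

lemma pB_leibniz0 (r : R) (f : ι →₀ R) (s : R) :
    p.B10 (r • f) s = r * p.B10 f s := by
  unfold B10
  rw [emb8_smulR, br_mul_left, B10_antisymmC, zero_mul, add_zero, coeff_C_mul]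

lemma pB_jacobi0 (f g : ι →₀ R) (r : R) :
    p.B10 (p.B11 f g) r = p.B10 f (p.B10 g r) - p.B10 g (p.B10 f r) := by
  have hj := p.jacobi (emb8 f) (emb8 g) (C r)
  rw [key0 p g r, key0 p f r, key1 p f g, key0 p f (p.B10 g r), key0 p g (p.B10 f r),
    key0 p (p.B11 f g) r] at hj
  have h0 := congrArg (coeff (0 : ι →₀ ℕ)) hj
  rw [coeff_add] at h0
  simp only [coeff_zero_C] at h0
  linear_combination -h0

lemma pB_jacobi1 (f g h : ι →₀ R) :
    p.B11 f (p.B11 g h) = p.B11 (p.B11 f g) h + p.B11 g (p.B11 f h) := by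
  have hj := p.jacobi (emb8 f) (emb8 g) (emb8 h)
  rw [key1 p g h, key1 p f g, key1 p f h] at hj
  have h0 := congrArg unemb8 hj
  rw [unemb8_add] at h0
  unfold B11
  exact h0

/-- restriction of a Poisson structure to degrees `≤ 1` -/
def toRinged : RingedLie R ι where
  b10 := LinearMap.mk₂ ℂ p.B10
    (fun f f' r => by unfold B10; rw [emb8_add, map_add, LinearMap.add_apply, coeff_add])
    (fun c f r => by unfold B10; rw [emb8_smulC, map_smul, LinearMap.smul_apply, coeff_smul])
    (fun f r s => by unfold B10; rw [map_add, map_add, coeff_add])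
    (fun c f r => by unfold B10; rw [C_smulC, map_smul, coeff_smul])
  b11 := LinearMap.mk₂ ℂ p.B11
    (fun f f' g => by unfold B11; rw [emb8_add, map_add, LinearMap.add_apply, unemb8_add])
    (fun c f g => by unfold B11; rw [emb8_smulC, map_smul, LinearMap.smul_apply, unemb8_smulC])
    (fun f g g' => by unfold B11; rw [emb8_add, map_add, unemb8_add])
    (fun c f g => by unfold B11; rw [emb8_smulC, map_smul, unemb8_smulC])
  antisymm := fun f g => p.pB_antisymm f g
  deriv0 := fun f r s => p.pB_deriv0 f r s
  leibniz1 := fun r f f' => p.pB_leibniz1 r f f'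
  leibniz0 := fun r f s => p.pB_leibniz0 r f s
  jacobi0 := fun f g r => p.pB_jacobi0 f g r
  jacobi1 := fun f g h => p.pB_jacobi1 f g h

@[simp] lemma toRinged_b10 (f : ι →₀ R) (r : R) : (p.toRinged).b10 f r = p.B10 f r := rfl
@[simp] lemma toRinged_b11 (f g : ι →₀ R) : (p.toRinged).b11 f g = p.B11 f g := rfl

end PoissonNegOne

lemma poisson_ext {p q : PoissonNegOne R ι} (h : p.br = q.br) : p = q := by
  cases p; cases q; cases h; rfl

lemma ringedLie_ext {L M : RingedLie R ι} (h1 : L.b10 = M.b10) (h2 : L.b11 = M.b11) :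
    L = M := by
  cases L; cases M; cases h1; cases h2; rfl

lemma br_eq_of_gen {p q : PoissonNegOne R ι}
    (hCC : ∀ r s, p.br (C r) (C s) = q.br (C r) (C s))
    (hXC : ∀ i r, p.br (X i) (C r) = q.br (X i) (C r))
    (hCX : ∀ r i, p.br (C r) (X i) = q.br (C r) (X i))
    (hXX : ∀ i j, p.br (X i) (X j) = q.br (X i) (X j)) : ∀ f g, p.br f g = q.br f g := by
  have aux : ∀ u, (∀ r, p.br u (C r) = q.br u (C r)) →
      (∀ i, p.br u (X i) = q.br u (X i)) → ∀ g, p.br u g = q.br u g := by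
    intro u h1 h2 g
    induction g using MvPolynomial.induction_on with
    | C r => exact h1 r
    | add a b ha hb => rw [map_add, map_add, ha, hb]
    | mul_X a n ha => rw [p.leibniz, q.leibniz, ha, h2 n]
  intro f
  induction f using MvPolynomial.induction_on with
  | C r => exact aux (C r) (hCC r) (fun i => hCX r i)
  | add a b ha hb =>
    intro g
    rw [map_add, map_add, LinearMap.add_apply, LinearMap.add_apply, ha g, hb g]
  | mul_X a n ha =>
    intro g
    rw [p.br_mul_left, q.br_mul_left, ha g, aux (X n) (hXC n) (hXX n) g]

lemma left_inv_aux (p : PoissonNegOne R ι) :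
    (p.toRinged).toPoisson = p := by
  apply poisson_ext
  have hCC : ∀ r s, ((p.toRinged).toPoisson).br (C r) (C s) = p.br (C r) (C s) := by
    intro r s
    rw [show ((p.toRinged).toPoisson).br (C r) (C s) = (p.toRinged).bb (C r) (C s) from rfl,
      RingedLie.bb_C_C, p.B10_antisymmC]
  have hXC : ∀ i r, ((p.toRinged).toPoisson).br (X i) (C r) = p.br (X i) (C r) := by
    intro i r
    rw [show ((p.toRinged).toPoisson).br (X i) (C r) = (p.toRinged).bb (X i) (C r) from rfl,
      RingedLie.bb_X_C]
    rw [show (p.toRinged).dd i r = p.B10 (Finsupp.single i 1) r from rfl]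
    rw [← p.key0, RingedLie.emb8_X]
  have hXX : ∀ i j, ((p.toRinged).toPoisson).br (X i) (X j) = p.br (X i) (X j) := by
    intro i j
    rw [show ((p.toRinged).toPoisson).br (X i) (X j) = (p.toRinged).bb (X i) (X j) from rfl,
      RingedLie.bb_X_X]
    rw [show (p.toRinged).BB i j
      = emb8 (p.B11 (Finsupp.single i 1) (Finsupp.single j 1)) from rfl]
    rw [← p.key1, RingedLie.emb8_X, RingedLie.emb8_X]
  have hCX : ∀ r i, ((p.toRinged).toPoisson).br (C r) (X i) = p.br (C r) (X i) := by
    intro r i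
    rw [((p.toRinged).toPoisson).antisymm, p.antisymm, hXC]
  refine LinearMap.ext fun f => LinearMap.ext fun g => ?_
  exact br_eq_of_gen hCC hXC hCX hXX f g

lemma right_inv_aux (L : RingedLie R ι) :
    (L.toPoisson).toRinged = L := by
  apply ringedLie_ext
  · refine LinearMap.ext fun f => LinearMap.ext fun r => ?_
    rw [show ((L.toPoisson).toRinged).b10 f r = (L.toPoisson).B10 f r from rfl]
    unfold PoissonNegOne.B10
    rw [show (L.toPoisson).br (emb8 f) (C r) = L.bb (emb8 f) (C r) from rfl,
      RingedLie.bb_emb_C, coeff_zero_C]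
  · refine LinearMap.ext fun f => LinearMap.ext fun g => ?_
    rw [show ((L.toPoisson).toRinged).b11 f g = (L.toPoisson).B11 f g from rfl]
    unfold PoissonNegOne.B11
    rw [show (L.toPoisson).br (emb8 f) (emb8 g) = L.bb (emb8 f) (emb8 g) from rfl,
      RingedLie.bb_emb_emb, unemb8_emb8]

/-- the equivalence -/
def Theta : PoissonNegOne R ι ≃ RingedLie R ι where
  toFun := PoissonNegOne.toRinged
  invFun := RingedLie.toPoisson
  left_inv := left_inv_aux
  right_inv := right_inv_aux

end Stmt8Main

/-- there is a bijective correspondence between Poisson structures of degree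
`-1` on `R ⊗ S•(V)` and ringed Lie algebra brackets on `R ⊕ (V ⊗ R)`; the correspondence
restricts the Poisson bracket to the elements of degree `≤ 1`, via the embeddings
`r ↦ C r` of `R` and `f ↦ ∑_i f_i · X_i` of `V ⊗ R` into `R ⊗ S•(V)`. -/
theorem stmt_8 (R : Type) [CommRing R] [Algebra ℂ R] (ι : Type) :
    ∃ Θ : PoissonNegOne R ι ≃ RingedLie R ι,
      ∀ p : PoissonNegOne R ι,
        (∀ (f : ι →₀ R) (r : R),
            p.br (f.sum fun i r' => C r' * X i) (C r) = C ((Θ p).b10 f r)) ∧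
        (∀ f g : ι →₀ R,
            p.br (f.sum fun i r' => C r' * X i) (g.sum fun i r' => C r' * X i)
              = ((Θ p).b11 f g).sum fun i r' => C r' * X i) := by
  refine ⟨Theta, fun p => ⟨fun f r => ?_, fun f g => ?_⟩⟩
  · exact p.key0 f r
  · exact p.key1 f g
end

section
/- On the Poisson algebra ℂ(x_1,...,x_g)[y_1,...,y_g] with brackets {x_α, y_β} = −2Π(x_α)δ_{αβ}, {x_α, x_β} = 0, {y_α, y_β} = 0, where Π(X) = ∏_{i=1}^{g+3}(X − a_i), the generating series X(t) = ∑_α 1/(t − x_α) and Y(t) = ∑_α (y_α/Π(x_α))/(t − x_α) (as formal series in t^{-1}) satisfy {Y(t), X(s)} = 2 ∂_s((X(s) − X(t))/(s − t)). -/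
open Finset

/-- Partial derivative in the variable `x_α` of a function `F(x, y)` on `ℂ^g × ℂ^g`. -/
noncomputable def pdx (g : ℕ) (F : (Fin g → ℂ) → (Fin g → ℂ) → ℂ) (α : Fin g)
    (x y : Fin g → ℂ) : ℂ :=
  deriv (fun z => F (Function.update x α z) y) (x α)

/-- Partial derivative in the variable `y_α` of a function `F(x, y)` on `ℂ^g × ℂ^g`. -/
noncomputable def pdy (g : ℕ) (F : (Fin g → ℂ) → (Fin g → ℂ) → ℂ) (α : Fin g)
    (x y : Fin g → ℂ) : ℂ :=
  deriv (fun z => F x (Function.update y α z)) (y α)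

/-- The Poisson bracket on functions of `(x, y)` determined by
`{x_α, y_β} = -2 Π(x_α) δ_{αβ}`, `{x_α, x_β} = {y_α, y_β} = 0`, where
`Π(X) = ∏_{i=1}^{g+3} (X - a_i)`. -/
noncomputable def PB (g : ℕ) (a : Fin (g+3) → ℂ)
    (F G : (Fin g → ℂ) → (Fin g → ℂ) → ℂ) (x y : Fin g → ℂ) : ℂ :=
  ∑ α, (-2 * ∏ i, (x α - a i)) *
    (pdx g F α x y * pdy g G α x y - pdy g F α x y * pdx g G α x y)

/-! Both series are sums of terms depending on a single pair `(x_α, y_α)`, and `X(s)` does not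
involve `y` at all, so the bracket collapses to `∑_α 2 Π(x_α) ∂_{y_α} Y(t) ∂_{x_α} X(s)
= ∑_α 2 / ((t - x_α)(s - x_α)²)`. On the other side the divided difference of `1/(σ - x_α)`
is `-1/((σ - x_α)(t - x_α))`, whose `σ`-derivative at `s` gives the same sum. -/

theorem hasDerivAt_sum_update {ι : Type*} [Fintype ι] [DecidableEq ι] (ψ : ι → ℂ → ℂ)
    (v : ι → ℂ) (α : ι) {d : ℂ} (hψ : HasDerivAt (ψ α) d (v α)) :
    HasDerivAt (fun z => ∑ β, ψ β (Function.update v α z β)) d (v α) := by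
  have h : HasDerivAt (fun z => ∑ β, ψ β (Function.update v α z β))
      (∑ β, if β = α then d else 0) (v α) := by
    refine HasDerivAt.fun_sum fun β _ => ?_
    rcases eq_or_ne β α with rfl | hβ
    · rw [if_pos rfl]
      simpa only [Function.update_self] using hψ
    · rw [if_neg hβ]
      simpa only [Function.update_of_ne hβ] using hasDerivAt_const _ _
  rwa [Finset.sum_ite_eq', if_pos (mem_univ α)] at h

section PartialDerivatives

variable {g : ℕ} (α : Fin g) (x y : Fin g → ℂ)

theorem pdx_sum_apply (φ : Fin g → (Fin g → ℂ) → ℂ → ℂ) {d : ℂ}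
    (hφ : HasDerivAt (φ α y) d (x α)) :
    pdx g (fun x' y' => ∑ β, φ β y' (x' β)) α x y = d :=
  (hasDerivAt_sum_update (fun β => φ β y) x α hφ).deriv

theorem pdy_sum_apply (φ : Fin g → (Fin g → ℂ) → ℂ → ℂ) {d : ℂ}
    (hφ : HasDerivAt (φ α x) d (y α)) :
    pdy g (fun x' y' => ∑ β, φ β x' (y' β)) α x y = d :=
  (hasDerivAt_sum_update (fun β => φ β x) y α hφ).deriv

theorem pdy_const_in_y (f : (Fin g → ℂ) → ℂ) : pdy g (fun x' _ => f x') α x y = 0 := by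
  simp [pdy]

end PartialDerivatives

theorem PB_const_in_y {g : ℕ} (a : Fin (g+3) → ℂ) (F : (Fin g → ℂ) → (Fin g → ℂ) → ℂ)
    (f : (Fin g → ℂ) → ℂ) (x y : Fin g → ℂ) :
    PB g a F (fun x' _ => f x') x y
      = ∑ α, 2 * (∏ i, (x α - a i)) * pdy g F α x y * pdx g (fun x' _ => f x') α x y := by
  refine Finset.sum_congr rfl fun α _ => ?_
  rw [pdy_const_in_y]
  ring

theorem inv_sub_sub_inv_sub_div {σ t c : ℂ} (hσt : σ ≠ t) (hσc : σ ≠ c) (htc : t ≠ c) :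
    ((σ - c)⁻¹ - (t - c)⁻¹) / (σ - t) = -((σ - c)⁻¹ * (t - c)⁻¹) := by
  have h₁ := sub_ne_zero.2 hσt
  have h₂ := sub_ne_zero.2 hσc
  have h₃ := sub_ne_zero.2 htc
  field_simp
  ring

theorem deriv_sum_inv_sub_divided_difference {ι : Type*} [Fintype ι] (c : ι → ℂ) {s t : ℂ}
    (hst : s ≠ t) (hs : ∀ i, s ≠ c i) (ht : ∀ i, t ≠ c i) :
    deriv (fun σ => ((∑ i, (σ - c i)⁻¹) - ∑ i, (t - c i)⁻¹) / (σ - t)) s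
      = ∑ i, ((s - c i) ^ 2)⁻¹ * (t - c i)⁻¹ := by
  have hev : (fun σ => ((∑ i, (σ - c i)⁻¹) - ∑ i, (t - c i)⁻¹) / (σ - t))
      =ᶠ[nhds s] fun σ => ∑ i, -((σ - c i)⁻¹ * (t - c i)⁻¹) := by
    filter_upwards [eventually_ne_nhds hst,
      Filter.eventually_all.2 fun i => eventually_ne_nhds (hs i)] with σ hσt hσc
    rw [← Finset.sum_sub_distrib, Finset.sum_div]
    exact Finset.sum_congr rfl fun i _ => inv_sub_sub_inv_sub_div hσt (hσc i) (ht i)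
  rw [hev.deriv_eq]
  refine (HasDerivAt.fun_sum fun i _ => ?_).deriv
  have hσ : HasDerivAt (fun σ : ℂ => σ - c i) 1 s := (hasDerivAt_id s).sub_const (c i)
  exact (((hσ.inv (sub_ne_zero.2 (hs i))).mul_const (t - c i)⁻¹).neg).congr_deriv (by ring)

theorem stmt_10_general (g : ℕ) (a : Fin (g+3) → ℂ) :
    ∀ x y : Fin g → ℂ, Function.Injective x → (∀ α i, x α ≠ a i) →
    ∀ s t : ℂ, s ≠ t → (∀ α, s ≠ x α) → (∀ α, t ≠ x α) →
      PB g a (fun x' y' => ∑ α, (y' α / ∏ i, (x' α - a i)) / (t - x' α))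
             (fun x' _ => ∑ α, (s - x' α)⁻¹) x y
        = 2 * deriv (fun σ => ((∑ α, (σ - x α)⁻¹) - ∑ α, (t - x α)⁻¹) / (σ - t)) s := by
  intro x y _ hxa s t hst hsx htx
  have hpdxX : ∀ α, pdx g (fun x' _ => ∑ β, (s - x' β)⁻¹) α x y = ((s - x α) ^ 2)⁻¹ :=
    fun α => pdx_sum_apply α x y (fun _ _ z => (s - z)⁻¹)
      ((((hasDerivAt_id' (x α)).const_sub s).inv (sub_ne_zero.2 (hsx α))).congr_deriv (by ring))
  have hpdyY : ∀ α, pdy g (fun x' y' => ∑ β, (y' β / ∏ i, (x' β - a i)) / (t - x' β)) α x y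
      = 1 / (∏ i, (x α - a i)) / (t - x α) := fun α =>
    pdy_sum_apply α x y (fun β x' w => (w / ∏ i, (x' β - a i)) / (t - x' β))
      (((hasDerivAt_id (y α)).div_const _).div_const _)
  rw [PB_const_in_y, deriv_sum_inv_sub_divided_difference x hst hsx htx, Finset.mul_sum]
  refine Finset.sum_congr rfl fun α _ => ?_
  have hprod : (∏ i, (x α - a i)) ≠ 0 := prod_ne_zero_iff.2 fun i _ => sub_ne_zero.2 (hxa α i)
  rw [hpdxX, hpdyY]
  field_simp

/-- in the Poisson algebra `ℂ(x₁,…,x_g)[y₁,…,y_g]` with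
`{x_α, y_β} = -2Π(x_α)δ_{αβ}`, the generating series `X(t) = ∑_α 1/(t - x_α)` and
`Y(t) = ∑_α (y_α/Π(x_α))/(t - x_α)` satisfy
`{Y(t), X(s)} = 2 ∂_s((X(s) - X(t))/(s - t))` (stated pointwise away from the poles). -/
theorem stmt_10 (g : ℕ) (hg : 1 ≤ g) (a : Fin (g+3) → ℂ) (ha : Function.Injective a) :
    ∀ x y : Fin g → ℂ, Function.Injective x → (∀ α i, x α ≠ a i) →
    ∀ s t : ℂ, s ≠ t → (∀ α, s ≠ x α) → (∀ α, t ≠ x α) →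
      PB g a (fun x' y' => ∑ α, (y' α / ∏ i, (x' α - a i)) / (t - x' α))
             (fun x' _ => ∑ α, (s - x' α)⁻¹) x y
        = 2 * deriv (fun σ => ((∑ α, (σ - x α)⁻¹) - ∑ α, (t - x α)⁻¹) / (σ - t)) s :=
  stmt_10_general g a
end

section
/- In the universal enveloping algebra U(sl_2)^{⊗N}, with e_i, f_i, h_i denoting the Chevalley generators acting in the i-th tensor factor and a_1,...,a_N distinct complex numbers, the Gaudin hamiltonians Ĥ_i = ∑_{j≠i} (e_i f_j + f_i e_j + (1/2) h_i h_j)/(a_i − a_j) pairwise commute: [Ĥ_i, Ĥ_j] = 0 for all i, j. -/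
/-!
Write `Ω p q = e_p f_q + f_p e_q + ½ h_p h_q`, so that `Ĥ_i = ∑_{k ≠ i} Ω i k / (a_i - a_k)`.
Two facts drive the proof. `Ω p q` commutes with `Ω r s` when `{p, q}` and `{r, s}` are disjoint,
and it commutes with the diagonal generators `x_p + x_q`, so that
`Ω p r + Ω q r = (e_p + e_q) f_r + (f_p + f_q) e_r + ½ (h_p + h_q) h_r` commutes with `Ω p q`
(the classical Yang–Baxter equation). Expanding `[Ĥ_i, Ĥ_j]`, only the terms involving three
distinct sites `i, j, k` survive; by Yang–Baxter they are all multiples of `[Ω i j, Ω j k]`, with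
total coefficient `1/((a_i-a_j)(a_j-a_k)) + 1/((a_i-a_k)(a_j-a_i)) - 1/((a_i-a_k)(a_j-a_k)) = 0`.
-/

open Finset

attribute [local instance] LieRing.ofAssociativeRing

theorem Ring.mul_lie {A : Type*} [Ring A] (x y z : A) : ⁅x * y, z⁆ = ⁅x, z⁆ * y + x * ⁅y, z⁆ := by
  simp only [Ring.lie_def]
  noncomm_ring

theorem inv_sub_mul_inv_sub_add_inv_sub_mul_inv_sub {K : Type*} [Field K] {x y z : K}
    (hxy : x ≠ y) (hxz : x ≠ z) (hyz : y ≠ z) :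
    (x - y)⁻¹ * (y - z)⁻¹ + (x - z)⁻¹ * (y - x)⁻¹ = (x - z)⁻¹ * (y - z)⁻¹ := by
  have := sub_ne_zero.2 hxy
  have := sub_ne_zero.2 hxz
  have := sub_ne_zero.2 hyz
  have := sub_ne_zero.2 hxy.symm
  field_simp
  ring

section Gaudin

variable {ι K A : Type*} [Field K] [Ring A] [Algebra K A]

def SitesCommute (e f h : ι → A) : Prop :=
  ∀ i j, i ≠ j → ∀ u ∈ ({e i, f i, h i} : Set A), ∀ v ∈ ({e j, f j, h j} : Set A), Commute u v

variable (K) in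
structure IsSl2Sites (e f h : ι → A) : Prop where
  lie_h_e : ∀ i, ⁅h i, e i⁆ = (2 : K) • e i
  lie_h_f : ∀ i, ⁅h i, f i⁆ = (-2 : K) • f i
  lie_e_f : ∀ i, ⁅e i, f i⁆ = h i
  sitesCommute : SitesCommute e f h

variable (K) in
def casimir (e f h : ι → A) (p q : ι) : A :=
  e p * f q + f p * e q + (2⁻¹ : K) • (h p * h q)

variable {e f h : ι → A}

theorem casimir_comm (hc : SitesCommute e f h) {p q : ι} (hpq : p ≠ q) :
    casimir K e f h p q = casimir K e f h q p := by
  simp only [casimir]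
  rw [hc p q hpq (e p) (by simp) (f q) (by simp), hc p q hpq (f p) (by simp) (e q) (by simp),
    hc p q hpq (h p) (by simp) (h q) (by simp), add_comm (f q * e p)]

theorem commute_casimir_of_ne (hc : SitesCommute e f h) {x p q : ι} (hxp : x ≠ p) (hxq : x ≠ q)
    {u : A} (hu : u ∈ ({e x, f x, h x} : Set A)) : Commute u (casimir K e f h p q) := by
  have hp := hc x p hxp u hu
  have hq := hc x q hxq u hu
  exact .add_right (.add_right ((hp _ (by simp)).mul_right (hq _ (by simp)))
    ((hp _ (by simp)).mul_right (hq _ (by simp))))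
    (((hp _ (by simp)).mul_right (hq _ (by simp))).smul_right _)

theorem commute_casimir_casimir (hc : SitesCommute e f h) {p q r s : ι} (hpr : p ≠ r)
    (hps : p ≠ s) (hqr : q ≠ r) (hqs : q ≠ s) :
    Commute (casimir K e f h p q) (casimir K e f h r s) := by
  have hp := fun u hu => commute_casimir_of_ne (K := K) hc hpr hps (u := u) hu
  have hq := fun u hu => commute_casimir_of_ne (K := K) hc hqr hqs (u := u) hu
  exact .add_left (.add_left ((hp _ (by simp)).mul_left (hq _ (by simp)))
    ((hp _ (by simp)).mul_left (hq _ (by simp))))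
    (((hp _ (by simp)).mul_left (hq _ (by simp))).smul_left _)

theorem IsSl2Sites.commute_casimir_add [NeZero (2 : K)] (hs : IsSl2Sites K e f h) {p q : ι}
    (hpq : p ≠ q) {x : ι → A} (hx : x ∈ ({e, f, h} : Set (ι → A))) :
    Commute (casimir K e f h p q) (x p + x q) := by
  obtain ⟨lie_h_e, lie_h_f, lie_e_f, hc⟩ := hs
  have lie_e_h : ∀ i, ⁅e i, h i⁆ = -((2 : K) • e i) := fun i => by rw [← lie_skew, lie_h_e]
  have lie_f_h : ∀ i, ⁅f i, h i⁆ = -((-2 : K) • f i) := fun i => by rw [← lie_skew, lie_h_f]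
  have lie_f_e : ∀ i, ⁅f i, e i⁆ = -h i := fun i => by rw [← lie_skew, lie_e_f]
  have lie_pq := fun {u v : A} hu hv => (hc p q hpq u hu v hv).lie_eq
  have lie_qp := fun {u v : A} hu hv => (hc q p hpq.symm u hu v hv).lie_eq
  rw [commute_iff_lie_eq]
  rcases hx with rfl | rfl | rfl <;>
  · simp only [casimir, add_lie, lie_add, smul_lie, Ring.mul_lie, lie_self, lie_h_e, lie_h_f,
      lie_e_f, lie_e_h, lie_f_h, lie_f_e, zero_mul, mul_zero]
    simp (disch := simp) only [lie_pq, lie_qp, zero_mul, mul_zero, add_zero, zero_add]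
    simp only [smul_mul_assoc, mul_smul_comm, neg_mul, mul_neg, smul_zero]
    match_scalars <;> field_simp <;> ring

theorem IsSl2Sites.commute_casimir_add_casimir [NeZero (2 : K)] (hs : IsSl2Sites K e f h)
    {p q r : ι} (hpq : p ≠ q) (hpr : p ≠ r) (hqr : q ≠ r) :
    Commute (casimir K e f h p q) (casimir K e f h p r + casimir K e f h q r) := by
  have hsplit : casimir K e f h p r + casimir K e f h q r =
      (e p + e q) * f r + (f p + f q) * e r + (2⁻¹ : K) • ((h p + h q) * h r) := by
    simp only [casimir, add_mul, smul_add]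
    abel
  have hp := fun x hx => hs.commute_casimir_add hpq (x := x) hx
  have hr := fun u hu =>
    (commute_casimir_of_ne (K := K) hs.sitesCommute hpr.symm hqr.symm (u := u) hu).symm
  rw [hsplit]
  exact .add_right (.add_right ((hp e (by simp)).mul_right (hr _ (by simp)))
    ((hp f (by simp)).mul_right (hr _ (by simp))))
    (((hp h (by simp)).mul_right (hr _ (by simp))).smul_right _)

theorem IsSl2Sites.lie_casimir_ik_casimir_ij [NeZero (2 : K)] (hs : IsSl2Sites K e f h)
    {i j k : ι} (hij : i ≠ j) (hik : i ≠ k) (hjk : j ≠ k) :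
    ⁅casimir K e f h i k, casimir K e f h i j⁆ = ⁅casimir K e f h i j, casimir K e f h j k⁆ := by
  have := (hs.commute_casimir_add_casimir hij hik hjk).lie_eq
  rwa [lie_add, add_eq_zero_iff_neg_eq, lie_skew] at this

theorem IsSl2Sites.lie_casimir_ik_casimir_jk [NeZero (2 : K)] (hs : IsSl2Sites K e f h)
    {i j k : ι} (hij : i ≠ j) (hik : i ≠ k) (hjk : j ≠ k) :
    ⁅casimir K e f h i k, casimir K e f h j k⁆ = -⁅casimir K e f h i j, casimir K e f h j k⁆ := by
  have := (hs.commute_casimir_add_casimir hik hij hjk.symm).lie_eq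
  rw [lie_add, casimir_comm hs.sitesCommute hjk.symm, add_eq_zero_iff_neg_eq',
    hs.lie_casimir_ik_casimir_ij hij hik hjk] at this
  exact neg_eq_iff_eq_neg.1 this

section Hamiltonians

variable [Fintype ι] [DecidableEq ι]

def gaudin (a : ι → K) (e f h : ι → A) (i : ι) : A :=
  ∑ j ∈ univ.erase i, (a i - a j)⁻¹ • casimir K e f h i j

theorem gaudin_eq_add_sum {a : ι → K} {i j : ι} (hij : i ≠ j) :
    gaudin a e f h i = (a i - a j)⁻¹ • casimir K e f h i j +
      ∑ k ∈ (univ.erase i).erase j, (a i - a k)⁻¹ • casimir K e f h i k :=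
  (add_sum_erase _ _ (mem_erase.2 ⟨hij.symm, mem_univ j⟩)).symm

theorem IsSl2Sites.commute_gaudin [NeZero (2 : K)] (hs : IsSl2Sites K e f h) {a : ι → K}
    (ha : Function.Injective a) (i j : ι) : Commute (gaudin a e f h i) (gaudin a e f h j) := by
  rcases eq_or_ne i j with rfl | hij
  · exact .refl _
  rw [commute_iff_lie_eq, gaudin_eq_add_sum hij, gaudin_eq_add_sum hij.symm,
    erase_right_comm (a := j), casimir_comm hs.sitesCommute hij.symm]
  simp only [add_lie, lie_add, smul_lie, lie_smul (R := K), sum_lie, lie_sum, lie_self, smul_zero,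
    zero_add, smul_sum, ← sum_add_distrib]
  refine sum_eq_zero fun k hk => ?_
  obtain ⟨hkj, hki⟩ : k ≠ j ∧ k ≠ i := by simpa using hk
  have hdiag : ∑ l ∈ (univ.erase i).erase j,
        (a i - a l)⁻¹ • ⁅casimir K e f h i l, casimir K e f h j k⁆ =
      (a i - a k)⁻¹ • ⁅casimir K e f h i k, casimir K e f h j k⁆ := by
    refine sum_eq_single_of_mem k hk fun l hl hlk => ?_
    obtain ⟨hlj, hli⟩ : l ≠ j ∧ l ≠ i := by simpa using hl
    rw [(commute_casimir_casimir hs.sitesCommute hij hki.symm hlj hlk).lie_eq, smul_zero]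
  rw [hdiag, hs.lie_casimir_ik_casimir_ij hij hki.symm hkj.symm,
    hs.lie_casimir_ik_casimir_jk hij hki.symm hkj.symm]
  linear_combination (norm := module) (inv_sub_mul_inv_sub_add_inv_sub_mul_inv_sub
    (ha.ne hij) (ha.ne hki.symm) (ha.ne hkj.symm)) • ⁅casimir K e f h i j, casimir K e f h j k⁆

end Hamiltonians

end Gaudin

theorem stmt_12_general (N : ℕ) (a : Fin N → ℂ) (ha : Function.Injective a)
    (A : Type) [Ring A] [Algebra ℂ A] (e f h : Fin N → A)
    (rel_he : ∀ i, h i * e i - e i * h i = (2 : ℂ) • e i)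
    (rel_hf : ∀ i, h i * f i - f i * h i = (-2 : ℂ) • f i)
    (rel_ef : ∀ i, e i * f i - f i * e i = h i)
    (comm : ∀ i j, i ≠ j → ∀ u ∈ ({e i, f i, h i} : Set A),
      ∀ v ∈ ({e j, f j, h j} : Set A), u * v = v * u)
    (H : Fin N → A)
    (hH : ∀ i, H i = ∑ j ∈ Finset.univ.erase i,
      ((a i - a j)⁻¹) • (e i * f j + f i * e j + (2⁻¹ : ℂ) • (h i * h j))) :
    ∀ i j, H i * H j = H j * H i := by
  obtain rfl : H = gaudin a e f h := funext hH
  exact (IsSl2Sites.mk rel_he rel_hf rel_ef comm).commute_gaudin ha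

/-- in `U(sl₂)^{⊗N}` — presented here as any `ℂ`-algebra containing, for
each `i`, elements `e_i, f_i, h_i` satisfying the `sl₂` relations `[h_i,e_i] = 2e_i`,
`[h_i,f_i] = -2f_i`, `[e_i,f_i] = h_i`, with generators in distinct tensor factors
commuting — the Gaudin hamiltonians
`Ĥ_i = ∑_{j≠i} (e_i f_j + f_i e_j + (1/2) h_i h_j)/(a_i - a_j)`
(for distinct `a₁,…,a_N`) pairwise commute. -/
theorem stmt_12 (N : ℕ) (hN : 2 ≤ N) (a : Fin N → ℂ) (ha : Function.Injective a)
    (A : Type) [Ring A] [Algebra ℂ A] (e f h : Fin N → A)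
    (rel_he : ∀ i, h i * e i - e i * h i = (2 : ℂ) • e i)
    (rel_hf : ∀ i, h i * f i - f i * h i = (-2 : ℂ) • f i)
    (rel_ef : ∀ i, e i * f i - f i * e i = h i)
    (comm : ∀ i j, i ≠ j → ∀ u ∈ ({e i, f i, h i} : Set A),
      ∀ v ∈ ({e j, f j, h j} : Set A), u * v = v * u)
    (H : Fin N → A)
    (hH : ∀ i, H i = ∑ j ∈ Finset.univ.erase i,
      ((a i - a j)⁻¹) • (e i * f j + f i * e j + (2⁻¹ : ℂ) • (h i * h j))) :
    ∀ i j, H i * H j = H j * H i :=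
  stmt_12_general N a ha A e f h rel_he rel_hf rel_ef comm H hH
end

section
/- Let a_1,...,a_{g+3} be distinct complex numbers, Π(X) = ∏_i(X − a_i), and let A_x be the ℂ-algebra generated by a variable x̂ (with all rational functions of x̂ adjoined) and ŷ subject to [ŷ, φ(x̂)] = 2Π(x̂) φ'(x̂) for every rational function φ regular at x̂. In A_x^{⊗g}, with x̂_α, ŷ_α the generators of the α-th factor, the series X̂(t) = ∑_α 1/(t − x̂_α) and Ŷ(t) = ∑_α Π(x̂_α)^{-1} ŷ_α/(t − x̂_α) satisfy [Ŷ(t), X̂(s)] = 2 ∂_s( (X̂(s) − X̂(t))/(s − t) ). -/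
open Finset

/-!
Cross terms `α ≠ β` of `[Ŷ(t), X̂(s)]` vanish, so the identity is checked one factor at a time.
There `[ŷ, x̂] = 2Π(x̂)` gives `[ŷ, (s - x̂)⁻¹] = 2Π(x̂)(s - x̂)⁻²`, so the diagonal term is
`2(t - x̂)⁻¹(s - x̂)⁻²`, and the resolvent identity
`(t - x̂)⁻¹(s - x̂)⁻¹ = ((t - x̂)⁻¹ - (s - x̂)⁻¹)/(s - t)` splits it into partial fractions.
-/

theorem Finset.sum_mul_sum_sub_sum_mul_sum_of_commute {ι R : Type*} [NonUnitalNonAssocRing R]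
    (I : Finset ι) (f g : ι → R) (h : ∀ i ∈ I, ∀ j ∈ I, i ≠ j → Commute (f i) (g j)) :
    (∑ i ∈ I, f i) * (∑ j ∈ I, g j) - (∑ j ∈ I, g j) * (∑ i ∈ I, f i)
      = ∑ i ∈ I, (f i * g i - g i * f i) := by
  rw [sum_mul_sum, sum_mul_sum, sum_comm (s := I) (t := I) (f := fun j i => g j * f i),
    ← sum_sub_distrib]
  refine sum_congr rfl fun i hi => ?_
  rw [← sum_sub_distrib]
  refine sum_eq_single i (fun j hj hji => ?_) (fun h => absurd hi h)
  rw [(h i hi j hj hji.symm).eq, sub_self]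

theorem commutator_eq_mul_commutator_mul_of_mul_eq_one {R : Type*} [Ring R] {u v : R}
    (huv : u * v = 1) (hvu : v * u = 1) (y : R) :
    y * v - v * y = v * (u * y - y * u) * v := by
  rw [mul_sub, sub_mul, ← mul_assoc, hvu, one_mul, mul_assoc, mul_assoc, huv, mul_one]

section Resolvent

variable {k A : Type*} [Field k] [Ring A] [Algebra k A]

theorem commutator_resolvent {x y D v : A} {s : k}
    (hv : (algebraMap k A s - x) * v = 1) (hv' : v * (algebraMap k A s - x) = 1)
    (hyx : y * x - x * y = D) (hD : Commute D v) :
    y * v - v * y = D * (v * v) := by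
  have hshift : (algebraMap k A s - x) * y - y * (algebraMap k A s - x) = D := by
    rw [sub_mul, mul_sub, Algebra.commutes, ← hyx]
    abel
  rw [commutator_eq_mul_commutator_mul_of_mul_eq_one hv hv', hshift, hD.symm.eq, mul_assoc]

theorem resolvent_mul_resolvent {x vs vt : A} {s t : k} (hst : s ≠ t)
    (hs : (algebraMap k A s - x) * vs = 1) (ht : vt * (algebraMap k A t - x) = 1) :
    vt * vs = (s - t)⁻¹ • (vt - vs) := by
  have hdiff : vt - vs = (s - t) • (vt * vs) := by
    calc vt - vs = vt * ((algebraMap k A s - x) - (algebraMap k A t - x)) * vs := by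
          rw [mul_sub, sub_mul, mul_assoc, hs, mul_one, ht, one_mul]
      _ = (s - t) • (vt * vs) := by
          rw [sub_sub_sub_cancel_right, ← map_sub, ← Algebra.commutes, mul_assoc,
            ← Algebra.smul_def]
  rw [hdiff, smul_smul, inv_mul_cancel₀ (sub_ne_zero.mpr hst), one_smul]

theorem resolvent_mul_resolvent_sq {x vs vt : A} {s t : k} (hst : s ≠ t)
    (hs : (algebraMap k A s - x) * vs = 1) (ht : vt * (algebraMap k A t - x) = 1) :
    vt * (vs * vs) = ((s - t) ^ 2)⁻¹ • (vt - vs) - (s - t)⁻¹ • (vs * vs) := by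
  rw [← mul_assoc, resolvent_mul_resolvent hst hs ht, smul_mul_assoc, sub_mul,
    resolvent_mul_resolvent hst hs ht, smul_sub, smul_smul, ← mul_inv, ← sq]

theorem commutator_diagonal_term {x y P Pinv vs vt : A} {s t : k} (c : k) (hst : s ≠ t)
    (hs : (algebraMap k A s - x) * vs = 1) (hs' : vs * (algebraMap k A s - x) = 1)
    (ht : vt * (algebraMap k A t - x) = 1) (hPinv : Pinv * P = 1)
    (hyx : y * x - x * y = c • P) (hP_vs : Commute P vs) (hP_vt : Commute P vt)
    (hvs_Pinv : Commute vs Pinv) (hvs_vt : Commute vs vt) :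
    (Pinv * vt * y) * vs - vs * (Pinv * vt * y)
      = c • ((s - t)⁻¹ • -(vs * vs) - ((s - t) ^ 2)⁻¹ • (vs - vt)) := by
  have hvs_left : vs * (Pinv * vt * y) = Pinv * vt * (vs * y) := by
    rw [← mul_assoc, (hvs_Pinv.mul_right hvs_vt).eq, mul_assoc]
  have hcomm : y * vs - vs * y = c • (P * (vs * vs)) := by
    rw [commutator_resolvent hs hs' hyx (hP_vs.smul_left c), smul_mul_assoc]
  rw [hvs_left, mul_assoc (Pinv * vt), ← mul_sub, hcomm, mul_smul_comm, mul_assoc Pinv,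
    ← mul_assoc vt, ← hP_vt.eq, mul_assoc P, ← mul_assoc Pinv, hPinv, one_mul,
    resolvent_mul_resolvent_sq hst hs ht]
  module

end Resolvent

theorem Commute.list_prod_ofFn_sub_algebraMap_left {k A : Type*} [CommSemiring k] [Ring A]
    [Algebra k A] {x z : A} (h : Commute x z) {n : ℕ} (a : Fin n → k) :
    Commute (List.ofFn fun i => x - algebraMap k A (a i)).prod z := by
  refine Commute.list_prod_left _ _ fun w hw => ?_
  obtain ⟨i, rfl⟩ := List.mem_ofFn.mp hw
  exact h.sub_left (Algebra.commutes (a i) z)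

theorem stmt_16_general (g : ℕ) (a : Fin (g+3) → ℂ)
    (A : Type) [Ring A] [Algebra ℂ A]
    (x y : Fin g → A) (xinv : Fin g → ℂ → A) (Pinv : Fin g → A)
    (hxinv : ∀ α s, (algebraMap ℂ A s - x α) * xinv α s = 1 ∧
        xinv α s * (algebraMap ℂ A s - x α) = 1)
    (hPinv : ∀ α, (List.ofFn (fun i => x α - algebraMap ℂ A (a i))).prod * Pinv α = 1 ∧
        Pinv α * (List.ofFn (fun i => x α - algebraMap ℂ A (a i))).prod = 1)
    (hcommx : ∀ u ∈ (Set.range x ∪ Set.range Pinv ∪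
          {z | ∃ α s, z = xinv α s} : Set A),
        ∀ v ∈ (Set.range x ∪ Set.range Pinv ∪
          {z | ∃ α s, z = xinv α s} : Set A), u * v = v * u)
    (hyx : ∀ α (p : Polynomial ℂ),
        y α * Polynomial.aeval (x α) p - Polynomial.aeval (x α) p * y α
          = (2 : ℂ) • ((List.ofFn (fun i => x α - algebraMap ℂ A (a i))).prod *
              Polynomial.aeval (x α) (Polynomial.derivative p)))
    (hycross : ∀ α β, α ≠ β → (y α * x β = x β * y α) ∧ (y α * Pinv β = Pinv β * y α) ∧
        (∀ s, y α * xinv β s = xinv β s * y α)) :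
    ∀ s t : ℂ, s ≠ t →
      (∑ α, Pinv α * xinv α t * y α) * (∑ α, xinv α s)
          - (∑ α, xinv α s) * (∑ α, Pinv α * xinv α t * y α)
        = (2 : ℂ) • ((s - t)⁻¹ • (- ∑ α, xinv α s * xinv α s)
            - (((s - t) ^ 2)⁻¹) • ((∑ α, xinv α s) - ∑ α, xinv α t)) := by
  intro s t hst
  have hx_comm α r : Commute (x α) (xinv α r) :=
    hcommx _ (.inl (.inl ⟨α, rfl⟩)) _ (.inr ⟨α, r, rfl⟩)
  have hinv_comm α r β : Commute (xinv α r) (Pinv β) :=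
    hcommx _ (.inr ⟨α, r, rfl⟩) _ (.inl (.inr ⟨β, rfl⟩))
  have hinv_inv_comm α r β q : Commute (xinv α r) (xinv β q) :=
    hcommx _ (.inr ⟨α, r, rfl⟩) _ (.inr ⟨β, q, rfl⟩)
  have hyx_X α := hyx α Polynomial.X
  simp only [Polynomial.aeval_X, Polynomial.derivative_X, map_one, mul_one] at hyx_X
  rw [sum_mul_sum_sub_sum_mul_sum_of_commute _ _ _ fun α _ β _ hαβ =>
      ((hinv_comm β s α).symm.mul_left (hinv_inv_comm β s α t).symm).mul_left
        ((hycross α β hαβ).2.2 s)]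
  simp only [← sum_neg_distrib, ← sum_sub_distrib, smul_sum]
  refine sum_congr rfl fun α _ => commutator_diagonal_term 2 hst (hxinv α s).1 (hxinv α s).2
    (hxinv α t).2 (hPinv α).2 (hyx_X α) ((hx_comm α s).list_prod_ofFn_sub_algebraMap_left a)
    ((hx_comm α t).list_prod_ofFn_sub_algebraMap_left a) (hinv_comm α s α) (hinv_inv_comm α s α t)

/-- let `A_x` be the algebra `ℂ(x̂)[ŷ]` with relation
`[ŷ, φ(x̂)] = 2Π(x̂)φ'(x̂)` (`Π(X) = ∏_{i=1}^{g+3}(X - a_i)`), and work in `A_x^{⊗g}` —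
presented here as any `ℂ`-algebra `A` with, for each `α`, elements `x̂_α`, `ŷ_α`,
inverses `(s - x̂_α)⁻¹` (for every scalar `s`) and `Π(x̂_α)⁻¹`, such that all "functions
of the `x̂`'s" commute, elements of distinct factors commute, and
`[ŷ_α, p(x̂_α)] = 2Π(x̂_α)p'(x̂_α)` for polynomials `p`.  Then the series
`X̂(t) = ∑_α (t - x̂_α)⁻¹` and `Ŷ(t) = ∑_α Π(x̂_α)⁻¹ (t - x̂_α)⁻¹ ŷ_α` satisfy
`[Ŷ(t), X̂(s)] = 2 ∂_s((X̂(s) - X̂(t))/(s - t))`, the derivative `∂_s` being written out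
via `∂_s X̂(s) = -∑_α (s - x̂_α)⁻²`. -/
theorem stmt_16 (g : ℕ) (hg : 1 ≤ g) (a : Fin (g+3) → ℂ) (ha : Function.Injective a)
    (A : Type) [Ring A] [Algebra ℂ A]
    (x y : Fin g → A) (xinv : Fin g → ℂ → A) (Pinv : Fin g → A)
    (hxinv : ∀ α s, (algebraMap ℂ A s - x α) * xinv α s = 1 ∧
        xinv α s * (algebraMap ℂ A s - x α) = 1)
    (hPinv : ∀ α, (List.ofFn (fun i => x α - algebraMap ℂ A (a i))).prod * Pinv α = 1 ∧
        Pinv α * (List.ofFn (fun i => x α - algebraMap ℂ A (a i))).prod = 1)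
    (hcommx : ∀ u ∈ (Set.range x ∪ Set.range Pinv ∪
          {z | ∃ α s, z = xinv α s} : Set A),
        ∀ v ∈ (Set.range x ∪ Set.range Pinv ∪
          {z | ∃ α s, z = xinv α s} : Set A), u * v = v * u)
    (hyx : ∀ α (p : Polynomial ℂ),
        y α * Polynomial.aeval (x α) p - Polynomial.aeval (x α) p * y α
          = (2 : ℂ) • ((List.ofFn (fun i => x α - algebraMap ℂ A (a i))).prod *
              Polynomial.aeval (x α) (Polynomial.derivative p)))
    (hycross : ∀ α β, α ≠ β → (y α * x β = x β * y α) ∧ (y α * Pinv β = Pinv β * y α) ∧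
        (∀ s, y α * xinv β s = xinv β s * y α)) :
    ∀ s t : ℂ, s ≠ t →
      (∑ α, Pinv α * xinv α t * y α) * (∑ α, xinv α s)
          - (∑ α, xinv α s) * (∑ α, Pinv α * xinv α t * y α)
        = (2 : ℂ) • ((s - t)⁻¹ • (- ∑ α, xinv α s * xinv α s)
            - (((s - t) ^ 2)⁻¹) • ((∑ α, xinv α s) - ∑ α, xinv α t)) :=
  stmt_16_general g a A x y xinv Pinv hxinv hPinv hcommx hyx hycross
end
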